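/- arXiv:2508.00538 — 2 statements merged into one kernel-verified Lean document; each statement's English description precedes it below -/
import Mathlib

section
/- For every α ∈ [0,1] there exists a Buck measurable set B_α ⊆ ℕ with μ(B_α) = α. -/
/-! Write `α = ∑_{j ∈ T} 2^-(j+1)` in binary and let `B` be the set of `n` whose binary expansion
ends in exactly `j` ones for some `j ∈ T`, i.e. `padicValNat 2 (n + 1) ∈ T`. Those `n` form the
progression `2^j - 1 + (2^(j+1))`, so covering `B` by these progressions for `j < k` together with
the progression `2^k - 1 + (2^k)` of all `n` ending in at least `k` ones gives
`μ*(B) ≤ α + 2^-k`, and likewise `μ*(ℕ \ B) ≤ 1 - α + 2^-k`. Conversely, counting residues modulo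
the product of the moduli shows that every finite cover of `ℕ` by progressions has weight at
least `1`, so `μ*(B) + μ*(ℕ \ B) ≥ 1`. -/

open scoped BigOperators

/-- Buck's measure density: the infimum of `∑ 1/mᵢ` over finite covers of `S`
by arithmetic progressions `{n | n ≡ rᵢ [MOD mᵢ]}`. -/
noncomputable def buckDensity (S : Set ℕ) : ℝ :=
  sInf {x : ℝ | ∃ (k : ℕ) (r m : Fin k → ℕ), (∀ i, 0 < m i) ∧
    (S ⊆ ⋃ i, {n : ℕ | n ≡ r i [MOD m i]}) ∧ x = ∑ i, (1 : ℝ) / (m i)}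

/-- A set is Buck measurable if `μ*(S) + μ*(ℕ \ S) = 1`. -/
def BuckMeasurable (S : Set ℕ) : Prop :=
  buckDensity S + buckDensity Sᶜ = 1

/-- `R(S : m)`: the number of residue classes modulo `m` occupied by `S`. -/
noncomputable def residueCount (S : Set ℕ) (m : ℕ) : ℕ :=
  ((fun s => s % m) '' S).ncard

open Finset

lemma buckDensity_le_of_subset_iUnion {ι : Type*} [Fintype ι] {S : Set ℕ} (r m : ι → ℕ)
    (hm : ∀ i, 0 < m i) (hS : S ⊆ ⋃ i, {n | n ≡ r i [MOD m i]}) :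
    buckDensity S ≤ ∑ i, (1 : ℝ) / m i := by
  let e := Fintype.equivFin ι
  refine csInf_le ⟨0, ?_⟩ ⟨Fintype.card ι, r ∘ e.symm, m ∘ e.symm, fun i => hm _, ?_, ?_⟩
  · rintro _ ⟨k, r, m, -, -, rfl⟩
    exact sum_nonneg fun i _ => by positivity
  · intro n hn
    obtain ⟨i, hi⟩ := Set.mem_iUnion.1 (hS hn)
    exact Set.mem_iUnion.2 ⟨e i, by simpa using hi⟩
  · exact (e.symm.sum_comp fun i => (1 : ℝ) / m i).symm

lemma one_le_sum_of_forall_modEq {ι : Type*} [Fintype ι] (r m : ι → ℕ) (hm : ∀ i, 0 < m i)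
    (hcov : ∀ n, ∃ i, n ≡ r i [MOD m i]) : 1 ≤ ∑ i, (1 : ℝ) / m i := by
  classical
  set M := ∏ i, m i
  have hM : 0 < M := prod_pos fun i _ => hm i
  have hdvd : ∀ i, m i ∣ M := fun i => dvd_prod_of_mem m (mem_univ i)
  have hcount : ∀ i, #{n ∈ range M | n ≡ r i [MOD m i]} = M / m i := fun i => by
    rw [← Nat.count_eq_card_filter_range, Nat.count_modEq_card _ (hm i),
      Nat.mod_eq_zero_of_dvd (hdvd i)]
    simp
  have hunion : M ≤ ∑ i, M / m i := calc
    M = #(range M) := (card_range M).symm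
    _ ≤ #(univ.biUnion fun i => {n ∈ range M | n ≡ r i [MOD m i]}) := card_le_card fun n hn => by
      obtain ⟨i, hi⟩ := hcov n
      exact mem_biUnion.2 ⟨i, mem_univ i, mem_filter.2 ⟨hn, hi⟩⟩
    _ ≤ ∑ i, #{n ∈ range M | n ≡ r i [MOD m i]} := card_biUnion_le
    _ = ∑ i, M / m i := by simp_rw [hcount]
  have hMpos : (0 : ℝ) < M := by exact_mod_cast hM
  refine le_of_mul_le_mul_left ?_ hMpos
  calc (M : ℝ) * 1 = M := mul_one _
    _ ≤ ∑ i, ((M / m i : ℕ) : ℝ) := by rw [← Nat.cast_sum]; exact Nat.cast_le.2 hunion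
    _ = M * ∑ i, (1 : ℝ) / m i := by
      rw [mul_sum]
      refine sum_congr rfl fun i _ => ?_
      rw [Nat.cast_div (hdvd i) (by exact_mod_cast (hm i).ne'), mul_one_div]

lemma one_le_buckDensity_add_compl (S : Set ℕ) : 1 ≤ buckDensity S + buckDensity Sᶜ := by
  have hne : ∀ T : Set ℕ, {x : ℝ | ∃ (k : ℕ) (r m : Fin k → ℕ), (∀ i, 0 < m i) ∧
      (T ⊆ ⋃ i, {n : ℕ | n ≡ r i [MOD m i]}) ∧ x = ∑ i, (1 : ℝ) / (m i)}.Nonempty := fun T =>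
    ⟨1, 1, fun _ => 0, fun _ => 1, fun _ => one_pos,
      fun n _ => Set.mem_iUnion.2 ⟨0, Nat.modEq_one⟩, by simp⟩
  suffices 1 - buckDensity S ≤ buckDensity Sᶜ by linarith
  refine le_csInf (hne Sᶜ) ?_
  rintro _ ⟨k₂, r₂, m₂, hm₂, hc₂, rfl⟩
  suffices 1 - ∑ i, (1 : ℝ) / m₂ i ≤ buckDensity S by linarith
  refine le_csInf (hne S) ?_
  rintro _ ⟨k₁, r₁, m₁, hm₁, hc₁, rfl⟩
  have := one_le_sum_of_forall_modEq (Sum.elim r₁ r₂) (Sum.elim m₁ m₂)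
    (Sum.forall.2 ⟨hm₁, hm₂⟩) fun n => by
      by_cases hn : n ∈ S
      · obtain ⟨i, hi⟩ := Set.mem_iUnion.1 (hc₁ hn)
        exact ⟨Sum.inl i, hi⟩
      · obtain ⟨i, hi⟩ := Set.mem_iUnion.1 (hc₂ hn)
        exact ⟨Sum.inr i, hi⟩
  rw [Fintype.sum_sum_type] at this
  simp only [Sum.elim_inl, Sum.elim_inr] at this
  linarith

lemma modEq_two_pow_sub_one_of_succ_modEq {n j m : ℕ} (h : n + 1 ≡ 2 ^ j [MOD m]) :
    n ≡ 2 ^ j - 1 [MOD m] :=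
  Nat.ModEq.add_right_cancel' 1 (by rwa [Nat.sub_add_cancel Nat.one_le_two_pow])

lemma modEq_of_padicValNat_succ_eq {n j : ℕ} (h : padicValNat 2 (n + 1) = j) :
    n ≡ 2 ^ j - 1 [MOD 2 ^ (j + 1)] := by
  obtain ⟨q, hq⟩ : 2 ^ j ∣ n + 1 := h ▸ pow_padicValNat_dvd
  have hq2 : ¬ 2 ∣ q := by
    rintro ⟨t, rfl⟩
    have := pow_succ_padicValNat_not_dvd (p := 2) (n := n + 1) n.succ_ne_zero
    rw [h] at this
    exact this ⟨t, by rw [hq, pow_succ, mul_assoc]⟩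
  have hq1 : q ≡ 1 [MOD 2] := Nat.two_dvd_ne_zero.1 hq2
  refine modEq_two_pow_sub_one_of_succ_modEq ?_
  rw [hq, pow_succ]
  simpa using hq1.mul_left' (2 ^ j)

lemma modEq_of_le_padicValNat_succ {n k : ℕ} (h : k ≤ padicValNat 2 (n + 1)) :
    n ≡ 2 ^ k - 1 [MOD 2 ^ k] := by
  have hdvd : 2 ^ k ∣ n + 1 := (pow_dvd_pow 2 h).trans pow_padicValNat_dvd
  exact modEq_two_pow_sub_one_of_succ_modEq
    ((Nat.modEq_zero_iff_dvd.2 hdvd).trans (Nat.modEq_zero_iff_dvd.2 dvd_rfl).symm)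

noncomputable def binaryPartialSum (T : Set ℕ) (k : ℕ) : ℝ :=
  ∑ j ∈ range k, T.indicator (fun j => 1 / 2 ^ (j + 1)) j

lemma binaryPartialSum_succ (T : Set ℕ) (k : ℕ) :
    binaryPartialSum T (k + 1) = binaryPartialSum T k + T.indicator (fun j => 1 / 2 ^ (j + 1)) k :=
  sum_range_succ _ _

lemma binaryPartialSum_add_compl (T : Set ℕ) (k : ℕ) :
    binaryPartialSum T k + binaryPartialSum Tᶜ k = 1 - 1 / 2 ^ k := by
  induction k with
  | zero => simp [binaryPartialSum]
  | succ k ih =>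
    rw [binaryPartialSum_succ, binaryPartialSum_succ, add_add_add_comm, ih,
      Set.indicator_self_add_compl_apply]
    field_simp
    ring

lemma binaryPartialSum_floor_digits {α : ℝ} (h1 : α < 1) (k : ℕ) :
    binaryPartialSum {j | ⌊α * 2 ^ (j + 1)⌋₊ % 2 = 1} k = ⌊α * 2 ^ k⌋₊ / 2 ^ k := by
  induction k with
  | zero => simp [binaryPartialSum, Nat.floor_eq_zero.2 h1]
  | succ k ih =>
    have hhalf : ⌊α * 2 ^ (k + 1)⌋₊ / 2 = ⌊α * 2 ^ k⌋₊ := by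
      rw [← Nat.floor_div_ofNat, pow_succ, ← mul_assoc, mul_div_cancel_right₀ _ two_ne_zero]
    have hsplit :
        (⌊α * 2 ^ (k + 1)⌋₊ : ℝ) = 2 * ⌊α * 2 ^ k⌋₊ + (⌊α * 2 ^ (k + 1)⌋₊ % 2 : ℕ) := by
      rw [← hhalf]; exact_mod_cast (Nat.div_add_mod _ 2).symm
    rw [binaryPartialSum_succ, ih, hsplit]
    rcases Nat.mod_two_eq_zero_or_one ⌊α * 2 ^ (k + 1)⌋₊ with hb | hb <;>
      simp [hb] <;> field_simp <;> ring

lemma exists_binaryPartialSum_le_of_lt_one {α : ℝ} (h0 : 0 ≤ α) (h1 : α < 1) :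
    ∃ T : Set ℕ, ∀ k, binaryPartialSum T k ≤ α ∧ binaryPartialSum Tᶜ k ≤ 1 - α := by
  refine ⟨{j | ⌊α * 2 ^ (j + 1)⌋₊ % 2 = 1}, fun k => ?_⟩
  have hsum := binaryPartialSum_add_compl {j | ⌊α * 2 ^ (j + 1)⌋₊ % 2 = 1} k
  rw [binaryPartialSum_floor_digits h1] at hsum ⊢
  have hpos : (0 : ℝ) < 2 ^ k := by positivity
  have hlo : (⌊α * 2 ^ k⌋₊ : ℝ) / 2 ^ k ≤ α := by
    rw [div_le_iff₀ hpos]; exact Nat.floor_le (by positivity)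
  have hhi : α ≤ (⌊α * 2 ^ k⌋₊ + 1) / 2 ^ k := by
    rw [le_div_iff₀ hpos]; exact (Nat.lt_floor_add_one _).le
  rw [add_div] at hhi
  exact ⟨hlo, by linarith⟩

lemma exists_binaryPartialSum_le {α : ℝ} (h0 : 0 ≤ α) (h1 : α ≤ 1) :
    ∃ T : Set ℕ, ∀ k, binaryPartialSum T k ≤ α ∧ binaryPartialSum Tᶜ k ≤ 1 - α := by
  rcases h1.lt_or_eq with h1 | rfl
  · exact exists_binaryPartialSum_le_of_lt_one h0 h1
  -- `1 = 0.111…` in binary: take the complement of the expansion of `0`.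
  · obtain ⟨T, hT⟩ := exists_binaryPartialSum_le_of_lt_one le_rfl one_pos
    exact ⟨Tᶜ, fun k => ⟨by linarith [(hT k).2], by rw [compl_compl]; linarith [(hT k).1]⟩⟩

lemma buckDensity_setOf_padicValNat_mem_le_add (T : Set ℕ) (k : ℕ) :
    buckDensity {n | padicValNat 2 (n + 1) ∈ T} ≤ binaryPartialSum T k + 1 / 2 ^ k := by
  classical
  let s := {j ∈ range k | j ∈ T}
  let r : Option s → ℕ := fun o => o.elim (2 ^ k - 1) fun j => 2 ^ (j : ℕ) - 1
  let m : Option s → ℕ := fun o => o.elim (2 ^ k) fun j => 2 ^ ((j : ℕ) + 1)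
  have hcover : {n | padicValNat 2 (n + 1) ∈ T} ⊆ ⋃ i, {n | n ≡ r i [MOD m i]} := fun n hn => by
    by_cases hk : padicValNat 2 (n + 1) < k
    · exact Set.mem_iUnion.2
        ⟨some ⟨_, mem_filter.2 ⟨mem_range.2 hk, hn⟩⟩, modEq_of_padicValNat_succ_eq rfl⟩
    · exact Set.mem_iUnion.2 ⟨none, modEq_of_le_padicValNat_succ (not_lt.1 hk)⟩
  calc _ ≤ ∑ i, (1 : ℝ) / m i :=
        buckDensity_le_of_subset_iUnion r m (by rintro (_ | _) <;> exact Nat.two_pow_pos _) hcover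
    _ = _ := by
      rw [Fintype.sum_option, add_comm]
      simp only [m, Option.elim_none, Option.elim_some]
      rw [sum_coe_sort s fun j => (1 : ℝ) / (2 ^ (j + 1) : ℕ), binaryPartialSum, sum_filter]
      push_cast
      simp only [Set.indicator_apply]

lemma buckDensity_setOf_padicValNat_mem_le (T : Set ℕ) {β : ℝ}
    (h : ∀ k, binaryPartialSum T k ≤ β) : buckDensity {n | padicValNat 2 (n + 1) ∈ T} ≤ β := by
  refine le_of_forall_pos_lt_add fun ε hε => ?_
  obtain ⟨k, hk⟩ := exists_pow_lt_of_lt_one hε one_half_lt_one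
  calc _ ≤ binaryPartialSum T k + 1 / 2 ^ k := buckDensity_setOf_padicValNat_mem_le_add T k
    _ < β + ε := add_lt_add_of_le_of_lt (h k) (by rwa [← one_div_pow])

theorem stmt_2 (α : ℝ) (hα : α ∈ Set.Icc (0 : ℝ) 1) :
    ∃ B : Set ℕ, BuckMeasurable B ∧ buckDensity B = α := by
  obtain ⟨T, hT⟩ := exists_binaryPartialSum_le hα.1 hα.2
  set B := {n | padicValNat 2 (n + 1) ∈ T}
  have hB : buckDensity B ≤ α := buckDensity_setOf_padicValNat_mem_le T fun k => (hT k).1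
  have hBc : buckDensity Bᶜ ≤ 1 - α := buckDensity_setOf_padicValNat_mem_le Tᶜ fun k => (hT k).2
  have hsum := one_le_buckDensity_add_compl B
  exact ⟨B, by unfold BuckMeasurable; linarith, by linarith⟩
end

section
/- For t ∈ ℕ let P_t be the set of natural numbers whose canonical factorization contains at most t prime factors (i.e. at most t distinct primes). Then P_t is Buck measurable and μ(P_t) = 0 for every t ∈ ℕ. -/
open scoped BigOperators

def buckSet (S : Set ℕ) : Set ℝ :=
  {x : ℝ | ∃ (k : ℕ) (r m : Fin k → ℕ), (∀ i, 0 < m i) ∧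
    (S ⊆ ⋃ i, {n : ℕ | n ≡ r i [MOD m i]}) ∧ x = ∑ i, (1 : ℝ) / (m i)}

lemma buckDensity_eq (S : Set ℕ) : buckDensity S = sInf (buckSet S) := rfl

lemma buckSet_nonempty (S : Set ℕ) : (buckSet S).Nonempty := by
  refine ⟨1, 1, fun _ => 0, fun _ => 1, fun i => one_pos, ?_, by simp⟩
  intro n _
  exact Set.mem_iUnion.2 ⟨0, Nat.modEq_one⟩

lemma buckSet_bddBelow (S : Set ℕ) : BddBelow (buckSet S) := by
  refine ⟨0, fun x hx => ?_⟩
  obtain ⟨k, r, m, hm, hcov, rfl⟩ := hx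
  exact Finset.sum_nonneg fun i _ => by positivity

lemma buckDensity_nonneg (S : Set ℕ) : 0 ≤ buckDensity S :=
  le_csInf (buckSet_nonempty S) fun x hx => by
    obtain ⟨k, r, m, hm, hcov, rfl⟩ := hx
    exact Finset.sum_nonneg fun i _ => by positivity

lemma buckDensity_le_one (S : Set ℕ) : buckDensity S ≤ 1 := by
  refine csInf_le (buckSet_bddBelow S) ?_
  exact ⟨1, fun _ => 0, fun _ => 1, fun i => one_pos,
    fun n _ => Set.mem_iUnion.2 ⟨0, Nat.modEq_one⟩, by simp⟩

/-- counting: number of `r < m*k` with `P r` where `P` is `m`-periodic. -/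
lemma card_filter_range_mul (m k : ℕ) (P : ℕ → Prop) [DecidablePred P]
    (hP : ∀ r, P (r + m) ↔ P r) :
    ((Finset.range (m * k)).filter P).card = k * ((Finset.range m).filter P).card := by
  induction k with
  | zero => simp
  | succ k ih =>
    have hper : ∀ j r, P (m * j + r) ↔ P r := by
      intro j
      induction j with
      | zero => simp
      | succ j ihj =>
        intro r
        have e : m * (j+1) + r = (m * j + r) + m := by ring
        rw [e, hP, ihj]
    have hmk : m * (k + 1) = m * k + m := by ring
    have hdisj : Disjoint ((Finset.range (m*k)).filter P)
        (((Finset.range m).map (addLeftEmbedding (m*k))).filter P) := by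
      refine Finset.disjoint_left.2 fun a ha hb => ?_
      simp only [Finset.mem_filter, Finset.mem_range] at ha
      simp only [Finset.mem_filter, Finset.mem_map, addLeftEmbedding_apply] at hb
      obtain ⟨⟨b, hb, hab⟩, _⟩ := hb
      omega
    rw [hmk, Finset.range_add, Finset.filter_union, Finset.card_union_of_disjoint hdisj,
      ih, Finset.filter_map, Finset.card_map]
    have : ((Finset.range m).filter (P ∘ (addLeftEmbedding (m*k)))).card
        = ((Finset.range m).filter P).card := by
      congr 1
      apply Finset.filter_congr
      intro x _
      simp [addLeftEmbedding_apply, hper k x]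
    rw [this]; ring

lemma one_le_buckDensity (A : Set ℕ)
    (h : ∀ M, 0 < M → ∀ r, ∃ n ∈ A, n % M = r % M) : 1 ≤ buckDensity A := by
  refine le_csInf (buckSet_nonempty A) fun x hx => ?_
  obtain ⟨k, r, m, hm, hcov, rfl⟩ := hx
  set M : ℕ := ∏ i, m i with hM
  have hMpos : 0 < M := Finset.prod_pos fun i _ => hm i
  have hdvd : ∀ i, m i ∣ M := fun i => Finset.dvd_prod_of_mem m (Finset.mem_univ i)
  -- counting
  have hsub : Finset.range M ⊆ Finset.univ.biUnion
      (fun i => (Finset.range M).filter (fun s => s % m i = r i % m i)) := by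
    intro s hs
    obtain ⟨n, hnA, hn⟩ := h M hMpos s
    obtain ⟨i, hi⟩ := Set.mem_iUnion.1 (hcov hnA)
    refine Finset.mem_biUnion.2 ⟨i, Finset.mem_univ i, Finset.mem_filter.2 ⟨hs, ?_⟩⟩
    have h1 : s ≡ n [MOD m i] :=
      Nat.ModEq.of_dvd (hdvd i) (Nat.ModEq.symm hn)
    exact h1.trans hi
  have hcard : ∀ i, ((Finset.range M).filter (fun s => s % m i = r i % m i)).card
      = M / m i := by
    intro i
    have hMe : M = m i * (M / m i) := (Nat.mul_div_cancel' (hdvd i)).symm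
    rw [hMe, card_filter_range_mul (m i) (M / m i) _ (fun s => by
      simp [Nat.add_mod_right])]
    have heq : ((Finset.range (m i)).filter (fun s => s % m i = r i % m i)) = {r i % m i} := by
      ext x
      simp only [Finset.mem_filter, Finset.mem_range, Finset.mem_singleton]
      constructor
      · rintro ⟨hx, hx2⟩; rwa [Nat.mod_eq_of_lt hx] at hx2
      · rintro rfl
        exact ⟨Nat.mod_lt _ (hm i), Nat.mod_mod_of_dvd _ dvd_rfl⟩
    rw [heq, Finset.card_singleton, mul_one]
    exact (Nat.mul_div_cancel_left _ (hm i)).symm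
  have hle : M ≤ ∑ i, M / m i := by
    calc M = (Finset.range M).card := (Finset.card_range M).symm
    _ ≤ _ := Finset.card_le_card hsub
    _ ≤ ∑ i, ((Finset.range M).filter (fun s => s % m i = r i % m i)).card :=
        Finset.card_biUnion_le
    _ = ∑ i, M / m i := by simp [hcard]
  -- real inequality
  have hcast : ∀ i, ((M / m i : ℕ) : ℝ) = (M : ℝ) * (1 / m i) := by
    intro i
    rw [Nat.cast_div (hdvd i) (by exact_mod_cast (hm i).ne')]
    ring
  have hR : (M : ℝ) ≤ ∑ i, (M : ℝ) * (1 / m i) := by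
    calc (M : ℝ) ≤ ((∑ i, M / m i : ℕ) : ℝ) := by exact_mod_cast hle
    _ = ∑ i, (M : ℝ) * (1 / m i) := by
        rw [Nat.cast_sum]; exact Finset.sum_congr rfl fun i _ => hcast i
  rw [← Finset.mul_sum] at hR
  have hMR : (0:ℝ) < M := by exact_mod_cast hMpos
  calc (1:ℝ) = M / M := by field_simp
  _ ≤ _ := by
      rw [div_le_iff₀ hMR]
      nlinarith [hR]

lemma compl_hits (t M rr : ℕ) (hM : 0 < M) :
    ∃ n : ℕ, t < n.primeFactors.card ∧ n % M = rr % M := by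
  set p : ℕ → ℕ := fun j => Nat.nth Nat.Prime (M + 1 + j) with hp
  have hprime : ∀ j, (p j).Prime := fun j =>
    Nat.nth_mem_of_infinite Nat.infinite_setOf_prime _
  have hmono : StrictMono (Nat.nth Nat.Prime) :=
    Nat.nth_strictMono Nat.infinite_setOf_prime
  have hgt : ∀ j, M < p j := fun j =>
    lt_of_lt_of_le (by omega) (hmono.le_apply)
  set Q : ℕ := ∏ j ∈ Finset.range (t+1), p j with hQ
  have hQpos : 0 < Q := Finset.prod_pos fun j _ => (hprime j).pos
  have hco : Nat.Coprime M Q := by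
    apply Nat.Coprime.prod_right
    intro j _
    refine (Nat.coprime_comm.2 (((hprime j).coprime_iff_not_dvd).2 ?_))
    intro hdvd
    exact absurd (Nat.le_of_dvd hM hdvd) (not_le.2 (hgt j))
  obtain ⟨n0, hn0M, hn0Q⟩ := Nat.chineseRemainder hco rr 0
  refine ⟨n0 + M * Q, ?_, ?_⟩
  · have hne : n0 + M * Q ≠ 0 := by positivity
    have hQd : Q ∣ n0 + M * Q := by
      have h1 : (n0 + M * Q) ≡ 0 [MOD Q] := by
        calc n0 + M * Q ≡ n0 + 0 [MOD Q] :=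
              Nat.ModEq.add_left n0 (Nat.modEq_zero_iff_dvd.2 ⟨M, mul_comm M Q⟩)
        _ = n0 := by ring
        _ ≡ 0 [MOD Q] := hn0Q
      exact Nat.modEq_zero_iff_dvd.1 h1
    have hsub : (Finset.range (t+1)).image p ⊆ (n0 + M * Q).primeFactors := by
      intro q hq
      simp only [Finset.mem_image, Finset.mem_range] at hq
      obtain ⟨j, hj, rfl⟩ := hq
      exact Nat.mem_primeFactors.2 ⟨hprime j,
        dvd_trans (Finset.dvd_prod_of_mem p (Finset.mem_range.2 hj)) hQd, hne⟩
    have hcardim : ((Finset.range (t+1)).image p).card = t + 1 := by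
      rw [Finset.card_image_of_injective _ (fun a b hab => by
        have := hmono.injective hab; omega)]
      exact Finset.card_range _
    have := Finset.card_le_card hsub
    omega
  · have : (n0 + M * Q) ≡ rr [MOD M] := by
      calc n0 + M * Q ≡ n0 + 0 [MOD M] :=
            Nat.ModEq.add_left n0 (Nat.modEq_zero_iff_dvd.2 ⟨Q, rfl⟩)
      _ = n0 := by ring
      _ ≡ rr [MOD M] := hn0M
    exact this

lemma exists_primes_prod_lt (N : ℕ) (δ : ℝ) (hδ : 0 < δ) :
    ∃ F : Finset ℕ, (∀ p ∈ F, p.Prime ∧ N < p) ∧ ∏ p ∈ F, (1 - 1/(p:ℝ)) < δ := by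
  set f : ℕ → ℝ := Set.indicator {p | p.Prime} (fun n => 1 / (n:ℝ)) with hf
  have hf0 : ∀ i, 0 ≤ f i := by
    intro i
    simp only [hf, Set.indicator_apply]
    split <;> positivity
  have htend : Filter.Tendsto (fun n => ∑ i ∈ Finset.range n, f i)
      Filter.atTop Filter.atTop :=
    (not_summable_iff_tendsto_nat_atTop_of_nonneg hf0).1 not_summable_one_div_on_primes
  set T : ℝ := ∑ q ∈ (Finset.range (N+1)).filter Nat.Prime, 1/(q:ℝ) with hT
  obtain ⟨n, hn⟩ := (Filter.tendsto_atTop.1 htend (T + (-Real.log δ) + 1)).exists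
  set F : Finset ℕ := ((Finset.range n).filter Nat.Prime).filter (fun q => N < q) with hF
  have hsum : ∑ i ∈ Finset.range n, f i
      = ∑ q ∈ (Finset.range n).filter Nat.Prime, 1/(q:ℝ) := by
    rw [Finset.sum_filter]
    refine Finset.sum_congr rfl fun i _ => ?_
    simp [hf, Set.indicator_apply, Set.mem_setOf_eq]
  have hsplit : ∑ q ∈ (Finset.range n).filter Nat.Prime, 1/(q:ℝ)
      = (∑ q ∈ F, 1/(q:ℝ))
        + ∑ q ∈ ((Finset.range n).filter Nat.Prime).filter (fun q => ¬ N < q), 1/(q:ℝ) :=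
    (Finset.sum_filter_add_sum_filter_not _ _ _).symm
  have hTle : ∑ q ∈ ((Finset.range n).filter Nat.Prime).filter (fun q => ¬ N < q), 1/(q:ℝ)
      ≤ T := by
    refine Finset.sum_le_sum_of_subset_of_nonneg ?_ (fun q _ _ => by positivity)
    intro q hq
    simp only [Finset.mem_filter, Finset.mem_range, not_lt] at hq
    exact Finset.mem_filter.2 ⟨Finset.mem_range.2 (by omega), hq.1.2⟩
  have hbig : -Real.log δ < ∑ q ∈ F, 1/(q:ℝ) := by
    have := hn
    rw [hsum, hsplit] at this
    linarith
  refine ⟨F, ?_, ?_⟩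
  · intro q hq
    simp only [hF, Finset.mem_filter, Finset.mem_range] at hq
    exact ⟨hq.1.2, hq.2⟩
  · have hp2 : ∀ q ∈ F, (0:ℝ) ≤ 1 - 1/(q:ℝ) := by
      intro q hq
      simp only [hF, Finset.mem_filter] at hq
      have h2 : 2 ≤ q := hq.1.2.two_le
      have : 1/(q:ℝ) ≤ 1 := by
        rw [div_le_one (by exact_mod_cast Nat.lt_of_lt_of_le Nat.zero_lt_two h2)]
        exact_mod_cast Nat.le_of_lt (Nat.lt_of_lt_of_le Nat.one_lt_two h2)
      linarith
    have hle : ∏ q ∈ F, (1 - 1/(q:ℝ)) ≤ Real.exp (-∑ q ∈ F, 1/(q:ℝ)) := by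
      rw [← Finset.sum_neg_distrib, Real.exp_sum]
      refine Finset.prod_le_prod hp2 fun q hq => ?_
      linarith [Real.add_one_le_exp (-(1/(q:ℝ)))]
    calc ∏ q ∈ F, (1 - 1/(q:ℝ)) ≤ Real.exp (-∑ q ∈ F, 1/(q:ℝ)) := hle
    _ < Real.exp (Real.log δ) := Real.exp_lt_exp.2 (by linarith)
    _ = δ := Real.exp_log hδ

lemma exists_prime_groups (c : ℕ) (δ : ℝ) (hδ : 0 < δ) : ∀ N : ℕ,
    ∃ G : Fin c → Finset ℕ, (∀ i, ∀ p ∈ G i, p.Prime ∧ N < p) ∧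
      (∀ i j, i ≠ j → Disjoint (G i) (G j)) ∧
      ∀ i, ∏ p ∈ G i, (1 - 1/(p:ℝ)) < δ := by
  induction c with
  | zero => exact fun N => ⟨fun i => i.elim0, fun i => i.elim0, fun i => i.elim0, fun i => i.elim0⟩
  | succ c ih =>
    intro N
    obtain ⟨F, hFmem, hFprod⟩ := exists_primes_prod_lt N δ hδ
    obtain ⟨G, hGmem, hGdisj, hGprod⟩ := ih (max N (F.sup id))
    refine ⟨Fin.cons F G, ?_, ?_, ?_⟩
    · refine Fin.cases ?_ ?_
      · simpa using hFmem
      · intro i p hp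
        have := hGmem i p (by simpa using hp)
        exact ⟨this.1, lt_of_le_of_lt (le_max_left _ _) this.2⟩
    · have key : ∀ j : Fin c, Disjoint F (G j) := by
        intro j
        refine Finset.disjoint_left.2 fun p hpF hpG => ?_
        have h1 : p ≤ F.sup id := Finset.le_sup (f := id) hpF
        have h2 : max N (F.sup id) < p := (hGmem j p hpG).2
        omega
      refine Fin.cases ?_ ?_
      · refine Fin.cases ?_ ?_
        · intro h; exact absurd rfl h
        · intro j _; simpa using key j
      · intro i
        refine Fin.cases ?_ ?_
        · intro _; simpa using (key i).symm
        · intro j hij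
          have : i ≠ j := fun h => hij (by rw [h])
          simpa using hGdisj i j this
    · refine Fin.cases ?_ ?_
      · simpa using hFprod
      · intro i; simpa using hGprod i

lemma buckDensity_le_pairs (S : Set ℕ) (F : Finset (ℕ × ℕ))
    (hm : ∀ p ∈ F, 0 < p.2)
    (hcov : S ⊆ ⋃ p ∈ F, {n : ℕ | n ≡ p.1 [MOD p.2]}) :
    buckDensity S ≤ ∑ p ∈ F, (1:ℝ)/p.2 := by
  refine csInf_le (buckSet_bddBelow S) ?_
  refine ⟨F.card, fun i => ((F.equivFin.symm i : F) : ℕ × ℕ).1,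
    fun i => ((F.equivFin.symm i : F) : ℕ × ℕ).2, ?_, ?_, ?_⟩
  · intro i
    exact hm _ (F.equivFin.symm i).2
  · intro n hn
    obtain ⟨p, hpF, hmod⟩ := Set.mem_iUnion₂.1 (hcov hn)
    refine Set.mem_iUnion.2 ⟨F.equivFin ⟨p, hpF⟩, ?_⟩
    simpa using hmod
  · rw [← Finset.sum_coe_sort F (fun p => (1:ℝ)/(p:ℕ×ℕ).2)]
    exact Fintype.sum_equiv F.equivFin (fun x => (1:ℝ)/((x : ℕ×ℕ).2))
      (fun i => (1:ℝ)/(((F.equivFin.symm i : F) : ℕ×ℕ).2)) fun x => by simp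

lemma totient_prod_primes (F : Finset ℕ) (h : ∀ p ∈ F, p.Prime) :
    (∏ p ∈ F, p).totient = ∏ p ∈ F, (p - 1) := by
  induction F using Finset.cons_induction with
  | empty => simp
  | cons p F hpF ih =>
    have hp : p.Prime := h p (Finset.mem_cons_self _ _)
    have hco : Nat.Coprime p (∏ q ∈ F, q) := by
      rw [Nat.coprime_prod_right_iff]
      intro q hq
      exact (Nat.coprime_primes hp (h q (Finset.mem_cons_of_mem hq))).2
        (fun hpq => hpF (hpq ▸ hq))
    rw [Finset.prod_cons, Finset.prod_cons, Nat.totient_mul hco, Nat.totient_prime hp,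
      ih (fun q hq => h q (Finset.mem_cons_of_mem hq))]

lemma buckDensity_P_eq_zero (t : ℕ) :
    buckDensity {n : ℕ | n.primeFactors.card ≤ t} = 0 := by
  classical
  refine le_antisymm ?_ (buckDensity_nonneg _)
  have key : ∀ ε : ℝ, 0 < ε → buckDensity {n : ℕ | n.primeFactors.card ≤ t} ≤ 0 + ε := by
    intro ε hε
    set δ : ℝ := ε / (2 * (t + 1)) with hδdef
    have hδ : 0 < δ := by positivity
    obtain ⟨G, hGmem, hGdisj, hGprod⟩ := exists_prime_groups (t + 1) δ hδ 0
    set Qi : Fin (t + 1) → ℕ := fun i => ∏ p ∈ G i, p with hQi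
    set Q : ℕ := ∏ i, Qi i with hQ
    have hQipos : ∀ i, 0 < Qi i := fun i =>
      Finset.prod_pos fun p hp => (hGmem i p hp).1.pos
    have hQpos : 0 < Q := Finset.prod_pos fun i _ => hQipos i
    have hQidvd : ∀ i, Qi i ∣ Q := fun i => Finset.dvd_prod_of_mem Qi (Finset.mem_univ i)
    have hpQ : ∀ i, ∀ p ∈ G i, p ∣ Q := fun i p hp =>
      dvd_trans (Finset.dvd_prod_of_mem _ hp) (hQidvd i)
    set L : ℕ := ⌈2 / ε⌉₊ + Q + 1 with hL
    have hLpos : 0 < L := by omega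
    set T' : Finset ℕ := (Finset.range Q).filter
      (fun r => ∃ i, ∀ p ∈ G i, ¬ p ∣ r) with hT'
    set Fp : Finset (ℕ × ℕ) := insert ((0 : ℕ), L) (T'.image (fun r => (r, Q))) with hFp
    -- positivity of moduli
    have hmpos : ∀ p ∈ Fp, 0 < p.2 := by
      intro p hp
      rcases Finset.mem_insert.1 hp with h | h
      · rw [h]; exact hLpos
      · obtain ⟨r, _, rfl⟩ := Finset.mem_image.1 h
        exact hQpos
    -- coverage
    have hcov : {n : ℕ | n.primeFactors.card ≤ t} ⊆
        ⋃ p ∈ Fp, {n : ℕ | n ≡ p.1 [MOD p.2]} := by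
      intro n hn
      simp only [Set.mem_setOf_eq] at hn
      by_cases hn0 : n = 0
      · refine Set.mem_iUnion₂.2 ⟨((0:ℕ), L), Finset.mem_insert_self _ _, ?_⟩
        simp [hn0, Nat.ModEq.refl]
      · have hex : ∃ i, ∀ p ∈ G i, ¬ p ∣ n := by
          by_contra hcon
          push_neg at hcon
          choose f hf1 hf2 using hcon
          have hmem : ∀ i, f i ∈ n.primeFactors := fun i =>
            Nat.mem_primeFactors.2 ⟨(hGmem i (f i) (hf1 i)).1, hf2 i, hn0⟩
          have hinj : Function.Injective f := by
            intro i j hij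
            by_contra hne
            exact (Finset.disjoint_left.1 (hGdisj i j hne)) (hf1 i) (hij ▸ hf1 j)
          have := Finset.card_le_card_of_injOn (s := Finset.univ) f (fun i _ => hmem i) (hinj.injOn)
          simp only [Finset.card_univ, Fintype.card_fin] at this
          omega
        obtain ⟨i, hi⟩ := hex
        set r : ℕ := n % Q with hr
        have hrT : r ∈ T' := by
          refine Finset.mem_filter.2 ⟨Finset.mem_range.2 (Nat.mod_lt _ hQpos), ⟨i, ?_⟩⟩
          intro p hp hpr
          refine hi p hp ?_
          have h1 : p ∣ Q * (n / Q) := Dvd.dvd.mul_right (hpQ i p hp) _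
          have h2 : Q * (n / Q) + n % Q = n := Nat.div_add_mod n Q
          exact h2 ▸ dvd_add h1 hpr
        refine Set.mem_iUnion₂.2 ⟨(r, Q),
          Finset.mem_insert_of_mem (Finset.mem_image.2 ⟨r, hrT, rfl⟩), ?_⟩
        exact (Nat.mod_modEq n Q).symm
    have hbd := buckDensity_le_pairs _ Fp hmpos hcov
    -- bound the sum
    have hnotmem : ((0:ℕ), L) ∉ T'.image (fun r => (r, Q)) := by
      intro h
      obtain ⟨r, _, heq⟩ := Finset.mem_image.1 h
      have hLQ : L = Q := (Prod.ext_iff.1 heq).2.symm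
      omega
    have hsum1 : ∑ p ∈ Fp, (1:ℝ)/p.2 = 1/L + T'.card * (1/Q) := by
      rw [hFp, Finset.sum_insert hnotmem,
        Finset.sum_image (fun a _ b _ h => (Prod.ext_iff.1 h).1)]
      simp [Finset.sum_const, nsmul_eq_mul]
    -- counting
    have hsub : T' ⊆ Finset.univ.biUnion
        (fun i => (Finset.range Q).filter (fun r => ∀ p ∈ G i, ¬ p ∣ r)) := by
      intro r hr
      obtain ⟨hrange, i, hi⟩ := Finset.mem_filter.1 hr
      exact Finset.mem_biUnion.2 ⟨i, Finset.mem_univ i, Finset.mem_filter.2 ⟨hrange, hi⟩⟩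
    have hcardi : ∀ i, ((Finset.range Q).filter (fun r => ∀ p ∈ G i, ¬ p ∣ r)).card
        = (Q / Qi i) * (Qi i).totient := by
      intro i
      have hper : ∀ r, (∀ p ∈ G i, ¬ p ∣ (r + Qi i)) ↔ (∀ p ∈ G i, ¬ p ∣ r) := by
        intro r
        refine forall₂_congr fun p hp => not_congr ?_
        have hpQi : p ∣ Qi i := Finset.dvd_prod_of_mem _ hp
        constructor
        · intro h
          have := Nat.dvd_sub h hpQi
          simpa using this
        · intro h; exact dvd_add h hpQi
      have hQe : Q = Qi i * (Q / Qi i) := (Nat.mul_div_cancel' (hQidvd i)).symm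
      have hinner : ((Finset.range (Qi i)).filter (fun r => ∀ p ∈ G i, ¬ p ∣ r))
          = (Finset.range (Qi i)).filter ((Qi i).Coprime) := by
        apply Finset.filter_congr
        intro r _
        rw [hQi]
        simp only [Nat.coprime_prod_left_iff]
        exact forall₂_congr fun p hp =>
          ((hGmem i p hp).1.coprime_iff_not_dvd).symm
      calc ((Finset.range Q).filter (fun r => ∀ p ∈ G i, ¬ p ∣ r)).card
          = ((Finset.range (Qi i * (Q / Qi i))).filter
              (fun r => ∀ p ∈ G i, ¬ p ∣ r)).card := by rw [← hQe]
        _ = (Q / Qi i) * ((Finset.range (Qi i)).filter (fun r => ∀ p ∈ G i, ¬ p ∣ r)).card :=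
            card_filter_range_mul _ _ _ hper
        _ = (Q / Qi i) * (Qi i).totient := by
            rw [hinner, Nat.totient_eq_card_coprime]
    have hcardle : T'.card ≤ ∑ i, (Q / Qi i) * (Qi i).totient := by
      calc T'.card ≤ _ := Finset.card_le_card hsub
        _ ≤ ∑ i, ((Finset.range Q).filter (fun r => ∀ p ∈ G i, ¬ p ∣ r)).card :=
            Finset.card_biUnion_le
        _ = ∑ i, (Q / Qi i) * (Qi i).totient := by simp [hcardi]
    -- real bound for each term
    have hterm : ∀ i, (((Q / Qi i) * (Qi i).totient : ℕ) : ℝ) * (1/Q)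
        = ∏ p ∈ G i, (1 - 1/(p:ℝ)) := by
      intro i
      have hQe : Q = Qi i * (Q / Qi i) := (Nat.mul_div_cancel' (hQidvd i)).symm
      have hQiR : (0:ℝ) < (Qi i : ℝ) := by exact_mod_cast hQipos i
      have hQdiv : (0:ℝ) < ((Q / Qi i : ℕ) : ℝ) := by
        have : 0 < Q / Qi i := Nat.div_pos (Nat.le_of_dvd hQpos (hQidvd i)) (hQipos i)
        exact_mod_cast this
      have htot : ((Qi i).totient : ℝ) = ∏ p ∈ G i, ((p:ℝ) - 1) := by
        rw [hQi, totient_prod_primes (G i) (fun p hp => (hGmem i p hp).1), Nat.cast_prod]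
        refine Finset.prod_congr rfl fun p hp => ?_
        rw [Nat.cast_sub (hGmem i p hp).1.one_lt.le, Nat.cast_one]
      have hQR : (Q:ℝ) = (Qi i : ℝ) * ((Q / Qi i : ℕ) : ℝ) := by exact_mod_cast hQe
      have hQiprod : (Qi i : ℝ) = ∏ p ∈ G i, (p:ℝ) := by rw [hQi]; push_cast; ring
      rw [Nat.cast_mul, htot, hQR]
      rw [show (((Q / Qi i : ℕ)):ℝ) * (∏ p ∈ G i, ((p:ℝ) - 1)) *
          (1 / ((Qi i:ℝ) * ((Q / Qi i : ℕ):ℝ)))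
          = (∏ p ∈ G i, ((p:ℝ) - 1)) / (Qi i : ℝ) by field_simp]
      rw [hQiprod, ← Finset.prod_div_distrib]
      refine Finset.prod_congr rfl fun p hp => ?_
      have hp0 : (0:ℝ) < (p:ℝ) := by exact_mod_cast (hGmem i p hp).1.pos
      field_simp
    have hTbound : (T'.card : ℝ) * (1/Q) < (t+1) * δ := by
      have h1 : (T'.card : ℝ) ≤ ((∑ i, (Q / Qi i) * (Qi i).totient : ℕ) : ℝ) := by
        exact_mod_cast hcardle
      have hQR : (0:ℝ) < (Q:ℝ) := by exact_mod_cast hQpos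
      calc (T'.card : ℝ) * (1/Q)
          ≤ ((∑ i, (Q / Qi i) * (Qi i).totient : ℕ) : ℝ) * (1/Q) := by
            apply mul_le_mul_of_nonneg_right h1; positivity
        _ = ∑ i, (((Q / Qi i) * (Qi i).totient : ℕ) : ℝ) * (1/Q) := by
            rw [Nat.cast_sum, Finset.sum_mul]
        _ = ∑ i, ∏ p ∈ G i, (1 - 1/(p:ℝ)) := Finset.sum_congr rfl fun i _ => hterm i
        _ < ∑ _i : Fin (t+1), δ := by
            refine Finset.sum_lt_sum_of_nonempty Finset.univ_nonempty fun i _ => hGprod i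
        _ = (t+1) * δ := by
            rw [Finset.sum_const, Finset.card_univ, Fintype.card_fin, nsmul_eq_mul]
            push_cast
            ring
    have hLbound : (1:ℝ)/L ≤ ε/2 := by
      have h2ε : (0:ℝ) < 2/ε := by positivity
      have hLge : 2/ε ≤ (L:ℝ) := by
        calc 2/ε ≤ (⌈2/ε⌉₊ : ℝ) := Nat.le_ceil _
        _ ≤ (L:ℝ) := by
            have : (⌈2/ε⌉₊ : ℕ) ≤ L := by omega
            exact_mod_cast this
      calc (1:ℝ)/L ≤ 1/(2/ε) := by
            apply one_div_le_one_div_of_le h2ε hLge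
        _ = ε/2 := by field_simp
    have hdelta : ((t:ℝ)+1) * δ = ε/2 := by
      rw [hδdef]
      field_simp
    calc buckDensity {n : ℕ | n.primeFactors.card ≤ t} ≤ ∑ p ∈ Fp, (1:ℝ)/p.2 := hbd
      _ = 1/L + T'.card * (1/Q) := hsum1
      _ ≤ ε/2 + ε/2 := by
          have := hTbound
          rw [hdelta] at this
          linarith
      _ = 0 + ε := by ring
  exact le_of_forall_pos_le_add key

theorem stmt_12 (t : ℕ) :
    BuckMeasurable {n : ℕ | n.primeFactors.card ≤ t} ∧
      buckDensity {n : ℕ | n.primeFactors.card ≤ t} = 0 := by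
  have h0 := buckDensity_P_eq_zero t
  have h1 : 1 ≤ buckDensity {n : ℕ | n.primeFactors.card ≤ t}ᶜ := by
    apply one_le_buckDensity
    intro M hM r
    obtain ⟨n, hn, hmod⟩ := compl_hits t M r hM
    exact ⟨n, by simpa [Set.mem_compl_iff, Set.mem_setOf_eq, not_le] using hn, hmod⟩
  have h2 : buckDensity {n : ℕ | n.primeFactors.card ≤ t}ᶜ ≤ 1 := buckDensity_le_one _
  refine ⟨?_, h0⟩
  unfold BuckMeasurable
  rw [h0]
  linarith
end
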